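/- Condition (a) of truncation for the lexicographic case: Define for x : ℕ → θ and n ∈ ℕ the extension [x](n) := (first n values of x followed by the constant 0_θ). Assume 0_θ is ◁-minimal (no z with z ◁ 0_θ). Let φ : (ℕ → θ) → ℕ and define ηφ x by: (ηφ x)(k) = 0_θ if there is i ≤ k with φ([x](i)) < i, and x(k) otherwise. Then if the lexicographic order satisfies ηφ x < y (i.e. y agrees with ηφ x below some n and y(n) ◁ (ηφ x)(n)), it follows that x < y. -/
import Mathlib

/-- `extSeq z0 x n` is `x` truncated at `n`, padded with `z0`. -/
def extSeq {θ : Type*} (z0 : θ) (x : ℕ → θ) (n : ℕ) : ℕ → θ :=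
  fun i => if i < n then x i else z0

open scoped Classical in
/-- The Spector-style truncation `ηφ`. -/
noncomputable def eta {θ : Type*} (z0 : θ) (φ : (ℕ → θ) → ℕ) (x : ℕ → θ) : ℕ → θ :=
  fun k => if ∃ i ≤ k, φ (extSeq z0 x i) < i then z0 else x k

/-- `LexGt lt u v` : `v` agrees with `u` below some `n` and `v n ◁ u n`
(`u < v` lexicographically). -/
def LexGt {θ : Type*} (lt : θ → θ → Prop) (u v : ℕ → θ) : Prop :=
  ∃ n : ℕ, (∀ i < n, v i = u i) ∧ lt (v n) (u n)

/-- Condition (a) of truncation for the lexicographic case (part of Lemma 6.4 of the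
paper): if `0_θ` is `◁`-minimal and `ηφ x < y` lexicographically, then `x < y`. -/
theorem eta_truncation_lt {θ : Type*} (lt : θ → θ → Prop) (z0 : θ)
    (hmin : ∀ z : θ, ¬ lt z z0) (φ : (ℕ → θ) → ℕ) (x y : ℕ → θ)
    (h : LexGt lt (eta z0 φ x) y) :
    LexGt lt x y := by
  classical
  obtain ⟨n, hag, hlt⟩ := h
  have hguard : ¬ ∃ i ≤ n, φ (extSeq z0 x i) < i := by
    intro hg
    have : eta z0 φ x n = z0 := by simp [eta, hg]
    rw [this] at hlt
    exact hmin _ hlt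
  have hn : eta z0 φ x n = x n := by simp [eta, hguard]
  refine ⟨n, ?_, hn ▸ hlt⟩
  intro i hi
  have : ¬ ∃ j ≤ i, φ (extSeq z0 x j) < j := fun ⟨j, hj, hφ⟩ =>
    hguard ⟨j, hj.trans hi.le, hφ⟩
  rw [hag i hi, eta, if_neg this]
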